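/- Let 𝓑 be the collection of all images under homothecies x ↦ a + t·x (a ∈ ℝ, t > 0) of the sets ((0,1) ∪ (x, x+ε)) ∩ (0,2) for x ∈ (0,2) and ε > 0. Then M_𝓑 χ_{(0,1)}(y) = 1 for every y ∈ (0,2); consequently C_𝓑(α) ≥ 2 for every α ∈ (0,1), and in particular lim inf_{α→1⁻} C_𝓑(α) ≥ 2. -/
import Mathlib


open MeasureTheory Set Filter
open scoped ENNReal

/-- The geometric maximal operator associated to a collection `B` of
subsets of `ℝ`. -/
noncomputable def MB (B : Set (Set ℝ)) (f : ℝ → ℝ≥0∞) (x : ℝ) : ℝ≥0∞ :=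
  ⨆ (R ∈ B) (_ : x ∈ R), (∫⁻ y in R, f y) / volume R

/-- The Beznosova–Hagelstein basis: all homothetic images of the sets
`((0,1) ∪ (x, x+ε)) ∩ (0,2)` for `x ∈ (0,2)` and `ε > 0`. -/
def BH : Set (Set ℝ) :=
  {T | ∃ x ε a t : ℝ, x ∈ Set.Ioo (0 : ℝ) 2 ∧ 0 < ε ∧ 0 < t ∧
    T = (fun y => a + t * y) ''
      ((Set.Ioo (0 : ℝ) 1 ∪ Set.Ioo x (x + ε)) ∩ Set.Ioo (0 : ℝ) 2)}

/-- The sharp Tauberian constant of `M_BH`. -/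
noncomputable def CBH (α : ℝ) : ℝ≥0∞ :=
  ⨆ (E : Set ℝ) (_ : MeasurableSet E) (_ : 0 < volume E) (_ : volume E < ⊤),
    volume {x : ℝ | MB BH (E.indicator 1) x > ENNReal.ofReal α} / volume E

lemma MB_le_one (y : ℝ) : MB BH ((Set.Ioo (0:ℝ) 1).indicator 1) y ≤ 1 := by
  refine iSup_le fun R => iSup_le fun hR => iSup_le fun hy => ?_
  calc (∫⁻ z in R, (Set.Ioo (0:ℝ) 1).indicator 1 z) / volume R
      ≤ volume R / volume R := by
        apply ENNReal.div_le_div _ le_rfl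
        calc ∫⁻ z in R, (Set.Ioo (0:ℝ) 1).indicator 1 z
            ≤ ∫⁻ _ in R, (1:ℝ≥0∞) :=
              lintegral_mono fun z => Set.indicator_le_self _ _ z
          _ = volume R := by simp
    _ ≤ 1 := ENNReal.div_self_le_one

lemma one_le_MB {y : ℝ} (hy : y ∈ Set.Ioo (0:ℝ) 2) :
    (1:ℝ≥0∞) ≤ MB BH ((Set.Ioo (0:ℝ) 1).indicator 1) y := by
  obtain ⟨hy0, hy2⟩ := hy
  refine ENNReal.le_of_forall_pos_le_add fun ε hε _ => ?_
  set e : ℝ := (ε:ℝ) with he_def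
  have he : 0 < e := hε
  set x : ℝ := y - min e y / 2 with hx_def
  have hmin : 0 < min e y := lt_min he hy0
  have hxpos : 0 < x := by
    have : min e y ≤ y := min_le_right _ _
    simp only [hx_def]; linarith
  have hxy : x < y := by simp only [hx_def]; linarith
  have hyxe : y < x + e := by
    have : min e y ≤ e := min_le_left _ _
    simp only [hx_def]; linarith
  have hx2 : x < 2 := lt_trans hxy hy2
  set R : Set ℝ := (Set.Ioo (0:ℝ) 1 ∪ Set.Ioo x (x + e)) ∩ Set.Ioo 0 2 with hR_def
  have hRB : R ∈ BH := by
    refine ⟨x, e, 0, 1, ⟨hxpos, hx2⟩, he, one_pos, ?_⟩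
    simp [hR_def]
  have hyR : y ∈ R := ⟨Or.inr ⟨hxy, hyxe⟩, hy0, hy2⟩
  have hsub : Set.Ioo (0:ℝ) 1 ⊆ R := fun z hz =>
    ⟨Or.inl hz, hz.1, lt_trans hz.2 one_lt_two⟩
  have hint : (∫⁻ z in R, (Set.Ioo (0:ℝ) 1).indicator 1 z) = 1 := by
    rw [lintegral_indicator measurableSet_Ioo]
    simp only [Pi.one_apply, setLIntegral_one,
      Measure.restrict_apply measurableSet_Ioo, Set.inter_eq_left.mpr hsub]
    simp
  have h1e : (0:ℝ) < 1 + e := by linarith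
  have hvol : volume R ≤ ENNReal.ofReal (1 + e) := by
    calc volume R ≤ volume (Set.Ioo (0:ℝ) 1 ∪ Set.Ioo x (x + e)) :=
          measure_mono Set.inter_subset_left
      _ ≤ volume (Set.Ioo (0:ℝ) 1) + volume (Set.Ioo x (x + e)) :=
          measure_union_le _ _
      _ = ENNReal.ofReal (1 + e) := by
          rw [Real.volume_Ioo, Real.volume_Ioo,
            ← ENNReal.ofReal_add (by norm_num) (by linarith)]
          norm_num
  have hterm : ENNReal.ofReal (1 / (1 + e)) ≤
      (∫⁻ z in R, (Set.Ioo (0:ℝ) 1).indicator 1 z) / volume R := by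
    rw [hint]
    calc ENNReal.ofReal (1 / (1 + e))
        = ENNReal.ofReal 1 / ENNReal.ofReal (1 + e) :=
          ENNReal.ofReal_div_of_pos h1e
      _ ≤ 1 / volume R := by
          rw [ENNReal.ofReal_one]
          exact ENNReal.div_le_div le_rfl hvol
  have hMB : ENNReal.ofReal (1 / (1 + e)) ≤ MB BH ((Set.Ioo (0:ℝ) 1).indicator 1) y :=
    hterm.trans (le_iSup_of_le R (le_iSup_of_le hRB (le_iSup_of_le hyR le_rfl)))
  have hkey : (1:ℝ) ≤ 1 / (1 + e) + e := by
    have h2 : 1 - e ≤ 1 / (1 + e) := by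
      rw [le_div_iff₀ h1e]; nlinarith
    linarith
  calc (1:ℝ≥0∞) = ENNReal.ofReal 1 := ENNReal.ofReal_one.symm
    _ ≤ ENNReal.ofReal (1 / (1 + e) + e) := ENNReal.ofReal_le_ofReal hkey
    _ = ENNReal.ofReal (1 / (1 + e)) + ENNReal.ofReal e :=
        ENNReal.ofReal_add (by positivity) he.le
    _ ≤ MB BH ((Set.Ioo (0:ℝ) 1).indicator 1) y + (ε:ℝ≥0∞) := by
        rw [he_def, ENNReal.ofReal_coe_nnreal]
        exact add_le_add hMB le_rfl

lemma MB_eq_one {y : ℝ} (hy : y ∈ Set.Ioo (0:ℝ) 2) :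
    MB BH ((Set.Ioo (0:ℝ) 1).indicator 1) y = 1 :=
  le_antisymm (MB_le_one y) (one_le_MB hy)

lemma two_le_CBH {α : ℝ} (hα : α ∈ Set.Ioo (0:ℝ) 1) : (2:ℝ≥0∞) ≤ CBH α := by
  have hαlt : ENNReal.ofReal α < 1 := ENNReal.ofReal_lt_one.mpr hα.2
  have hE : volume (Set.Ioo (0:ℝ) 1) = 1 := by simp
  have hsub : Set.Ioo (0:ℝ) 2 ⊆
      {x : ℝ | MB BH ((Set.Ioo (0:ℝ) 1).indicator 1) x > ENNReal.ofReal α} := by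
    intro z hz
    show ENNReal.ofReal α < _
    rw [MB_eq_one hz]
    exact hαlt
  have hterm : (2:ℝ≥0∞) ≤
      volume {x : ℝ | MB BH ((Set.Ioo (0:ℝ) 1).indicator 1) x > ENNReal.ofReal α} /
        volume (Set.Ioo (0:ℝ) 1) := by
    rw [hE, div_one]
    calc (2:ℝ≥0∞) = volume (Set.Ioo (0:ℝ) 2) := by
          rw [Real.volume_Ioo]; norm_num
      _ ≤ _ := measure_mono hsub
  refine hterm.trans ?_
  exact le_iSup_of_le (Set.Ioo 0 1) (le_iSup_of_le measurableSet_Ioo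
    (le_iSup_of_le (by rw [hE]; exact zero_lt_one)
      (le_iSup_of_le (by rw [hE]; exact ENNReal.one_lt_top) le_rfl)))

theorem nonconvex_basis_no_solyanik :
    (∀ y ∈ Set.Ioo (0 : ℝ) 2, MB BH ((Set.Ioo (0 : ℝ) 1).indicator 1) y = 1) ∧
    (∀ α ∈ Set.Ioo (0 : ℝ) 1, 2 ≤ CBH α) ∧
    2 ≤ Filter.liminf CBH (nhdsWithin 1 (Set.Iio 1)) := by
  refine ⟨fun y hy => MB_eq_one hy, fun α hα => two_le_CBH hα, ?_⟩
  have hev : ∀ᶠ α in nhdsWithin 1 (Set.Iio 1), (2:ℝ≥0∞) ≤ CBH α := by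
    filter_upwards [Ioo_mem_nhdsLT_of_mem
      (show (1:ℝ) ∈ Set.Ioc 0 1 by constructor <;> norm_num)] with α hα
    exact two_le_CBH hα
  exact le_liminf_of_le (by isBoundedDefault) hev
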